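/- Let K be a field, let A be a finite set of polynomials in K[x_1,…,x_n], and let x be one of the variables. Define Proj(A, x) to be the union of: all nonzero coefficients of each f ∈ A regarded as a univariate polynomial in x; the resultants res(f, ∂f/∂x, x) for f ∈ A; and the pairwise resultants res(f, g, x) for distinct f, g ∈ A. If G is a chordal structure of A that has a perfect elimination ordering in which x is greater than or equal to every variable occurring in A, then G is a chordal structure of Proj(A, x). -/

import Mathlib

open MvPolynomial

/-- The associated graph of a set of multivariate polynomials: vertices are variables,
with an edge between two distinct variables iff some polynomial contains both. -/
def assocGraph {σ R : Type*} [CommSemiring R] [DecidableEq σ]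
    (F : Set (MvPolynomial σ R)) : SimpleGraph σ where
  Adj i j := i ≠ j ∧ ∃ f ∈ F, i ∈ f.vars ∧ j ∈ f.vars
  symm := by
    constructor
    intro i j h
    exact ⟨h.1.symm, by obtain ⟨f, hf, hi, hj⟩ := h.2; exact ⟨f, hf, hj, hi⟩⟩
  loopless := by constructor; intro i h; exact h.1 rfl

/-- `lt` (a strict linear ordering of the vertices) is a perfect elimination ordering of `G`:
for every vertex `v`, the vertex `v` together with its earlier neighbours forms a clique. -/
def IsPEO {V : Type*} (G : SimpleGraph V) (lt : V → V → Prop) : Prop :=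
  ∀ v : V, G.IsClique (insert v {u | lt u v ∧ G.Adj u v})

/-- A graph is chordal if it admits a perfect elimination ordering. -/
def ChordalGraph {V : Type*} (G : SimpleGraph V) : Prop :=
  ∃ lt : V → V → Prop, IsStrictTotalOrder V lt ∧ IsPEO G lt

/-- `G` is a chordal structure of `F`: `G` is chordal and the associated graph of `F`
is a subgraph of `G`. -/
def ChordalStructure {σ R : Type*} [CommSemiring R] [DecidableEq σ]
    (G : SimpleGraph σ) (F : Set (MvPolynomial σ R)) : Prop :=
  ChordalGraph G ∧ assocGraph F ≤ G

/-- `f` regarded as a univariate polynomial in the variable `k`,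
with coefficients in the polynomial ring in the remaining variables. -/
noncomputable def toUnivar {σ R : Type*} [CommSemiring R] [DecidableEq σ] (k : σ)
    (f : MvPolynomial σ R) : Polynomial (MvPolynomial {j : σ // j ≠ k} R) :=
  optionEquivLeft R {j : σ // j ≠ k} (rename (Equiv.optionSubtypeNe k).symm f)

/-- The `i`-th coefficient of `f` regarded as a univariate polynomial in `k`,
viewed again as a polynomial in all the variables. -/
noncomputable def coeffWrt {σ R : Type*} [CommSemiring R] [DecidableEq σ] (k : σ)
    (f : MvPolynomial σ R) (i : ℕ) : MvPolynomial σ R :=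
  rename Subtype.val ((toUnivar k f).coeff i)

/-- The leading coefficient of `f` regarded as a univariate polynomial in `k`. -/
noncomputable def lcWrt {σ R : Type*} [CommSemiring R] [DecidableEq σ] (k : σ)
    (f : MvPolynomial σ R) : MvPolynomial σ R :=
  rename Subtype.val (toUnivar k f).leadingCoeff

/-- The Sylvester matrix of two univariate polynomials `p` and `q`:
the first `q.natDegree` rows are the shifted coefficient vectors of `p`,
the remaining `p.natDegree` rows are the shifted coefficient vectors of `q`. -/
noncomputable def sylvesterMatrix {R : Type*} [CommRing R] (p q : Polynomial R) :
    Matrix (Fin (q.natDegree + p.natDegree)) (Fin (q.natDegree + p.natDegree)) R :=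
  Matrix.of fun i j =>
    if (i : ℕ) < q.natDegree then
      (if (i : ℕ) ≤ (j : ℕ) ∧ (j : ℕ) ≤ (i : ℕ) + p.natDegree
        then p.coeff (p.natDegree - ((j : ℕ) - (i : ℕ))) else 0)
    else
      (if (i : ℕ) - q.natDegree ≤ (j : ℕ) ∧ (j : ℕ) ≤ ((i : ℕ) - q.natDegree) + q.natDegree
        then q.coeff (q.natDegree - ((j : ℕ) - ((i : ℕ) - q.natDegree))) else 0)

/-- The resultant of two univariate polynomials: the determinant of their Sylvester matrix. -/
noncomputable def resultant {R : Type*} [CommRing R] (p q : Polynomial R) : R :=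
  (sylvesterMatrix p q).det

/-- The resultant of `f` and `g` with respect to the variable `k`: the resultant of `f` and `g`
regarded as univariate polynomials in `k`, viewed again as a polynomial in all the variables. -/
noncomputable def resWrt {σ R : Type*} [CommRing R] [DecidableEq σ] (k : σ)
    (f g : MvPolynomial σ R) : MvPolynomial σ R :=
  rename Subtype.val (resultant (toUnivar k f) (toUnivar k g))

/-- The CAD projection operator: the nonzero coefficients (w.r.t. `x`) of the members of `A`,
the resultants `res(f, ∂f/∂x, x)` for `f ∈ A`, and the pairwise resultants `res(f, g, x)` for
distinct `f, g ∈ A`. -/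
noncomputable def ProjSet {σ R : Type*} [CommRing R] [DecidableEq σ] (x : σ)
    (A : Set (MvPolynomial σ R)) : Set (MvPolynomial σ R) :=
  {a | (∃ f ∈ A, ∃ i : ℕ, a = coeffWrt x f i) ∧ a ≠ 0} ∪
  {r | ∃ f ∈ A, r = resWrt x f (pderiv x f)} ∪
  {r | ∃ f ∈ A, ∃ g ∈ A, f ≠ g ∧ r = resWrt x f g}

/-! Every variable of a coefficient or resultant with respect to `x` occurs in `f` or `g`, so each
member of `Proj(A, x)` has its variables in `vars f` (a clique of `G`) or in `vars f ∪ vars g`.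
If `x` occurs in both `f` and `g`, every other variable of `f` and `g` is an earlier neighbour of
`x`, so `vars f ∪ vars g` lies in the clique that the perfect elimination ordering attaches to `x`.
If `x` does not occur in `f`, then `f` is constant in `x` and `res(f, g, x)` is a power of it. -/

section Vars

variable {σ R : Type*} [CommSemiring R]

theorem MvPolynomial.vars_pderiv_subset (i : σ) (f : MvPolynomial σ R) :
    (pderiv i f).vars ⊆ f.vars := by
  intro j hj
  rw [mem_vars_iff_mem_support] at hj ⊢
  obtain ⟨m, hm, hjm⟩ := hj
  refine ⟨m + Finsupp.single i 1, ?_, ?_⟩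
  · rw [mem_support_iff, coeff_pderiv] at hm
    exact mem_support_iff.2 (left_ne_zero_of_mul hm)
  · rw [Finsupp.mem_support_iff] at hjm ⊢
    simp [hjm]

theorem MvPolynomial.some_mem_vars_of_mem_vars_coeff_optionEquivLeft
    (f : MvPolynomial (Option σ) R) (i : ℕ) {s : σ}
    (hs : s ∈ ((optionEquivLeft R σ f).coeff i).vars) : some s ∈ f.vars := by
  rw [mem_vars_iff_mem_support] at hs ⊢
  obtain ⟨m, hm, hsm⟩ := hs
  exact ⟨m.optionElim i, (mem_support_coeff_optionEquivLeft R).1 hm, by simpa using hsm⟩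

variable [DecidableEq σ]

theorem val_mem_vars_of_mem_vars_coeff_toUnivar (k : σ)
    (f : MvPolynomial σ R) (i : ℕ) {s : {j : σ // j ≠ k}}
    (hs : s ∈ ((toUnivar k f).coeff i).vars) : (s : σ) ∈ f.vars := by
  obtain ⟨y, hy, hys⟩ :=
    mem_vars_rename _ _ (some_mem_vars_of_mem_vars_coeff_optionEquivLeft _ i hs)
  rw [Equiv.symm_apply_eq] at hys
  rwa [hys, Equiv.optionSubtypeNe_some] at hy

theorem vars_coeffWrt_subset (k : σ) (f : MvPolynomial σ R) (i : ℕ) :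
    (coeffWrt k f i).vars ⊆ f.vars := by
  intro y hy
  obtain ⟨s, hs, rfl⟩ := mem_vars_rename _ _ hy
  exact val_mem_vars_of_mem_vars_coeff_toUnivar k f i hs

theorem toUnivar_eq_C_of_notMem_vars {k : σ} {f : MvPolynomial σ R}
    (hk : k ∉ f.vars) : toUnivar k f = Polynomial.C ((toUnivar k f).coeff 0) := by
  refine Polynomial.eq_C_of_natDegree_eq_zero ?_
  rw [toUnivar, natDegree_optionEquivLeft, ← not_ne_iff, ← mem_vars_iff_degreeOf_ne_zero]
  intro hnone
  obtain ⟨y, hy, hyk⟩ := mem_vars_rename _ _ hnone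
  rw [Equiv.symm_apply_eq, Equiv.optionSubtypeNe_none] at hyk
  exact hk (hyk ▸ hy)

end Vars

section Resultant

variable {A : Type*} [CommRing A]

theorem Matrix.det_mem_of_forall_mem {n : Type*} [Fintype n] [DecidableEq n] {S : Subring A}
    (M : Matrix n n A) (hM : ∀ i j, M i j ∈ S) : M.det ∈ S := by
  let M' : Matrix n n S := fun i j => ⟨M i j, hM i j⟩
  have hmap : M = S.subtype.mapMatrix M' := rfl
  rw [hmap, ← RingHom.map_det]
  exact M'.det.2

theorem resultant_mem_of_coeff_mem {S : Subring A} {p q : Polynomial A}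
    (hp : ∀ i, p.coeff i ∈ S) (hq : ∀ i, q.coeff i ∈ S) : resultant p q ∈ S := by
  refine Matrix.det_mem_of_forall_mem _ fun i j => ?_
  simp only [sylvesterMatrix, Matrix.of_apply]
  split_ifs <;> first | exact hp _ | exact hq _ | exact S.zero_mem

theorem sylvesterMatrix_C_left (c : A) (q : Polynomial A) :
    sylvesterMatrix (Polynomial.C c) q = Matrix.diagonal fun _ => c := by
  have hC : (Polynomial.C c).natDegree = 0 := Polynomial.natDegree_C c
  ext i j
  have hi : (i : ℕ) < q.natDegree + (Polynomial.C c).natDegree := i.isLt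
  rw [sylvesterMatrix, Matrix.of_apply, if_pos (by omega), Matrix.diagonal_apply]
  by_cases hij : i = j
  · subst hij
    rw [if_pos rfl, if_pos ⟨le_refl _, Nat.le_add_right _ _⟩, Polynomial.coeff_C,
      if_pos (by omega)]
  · rw [if_neg (by omega), if_neg hij]

theorem sylvesterMatrix_C_right (p : Polynomial A) (c : A) :
    sylvesterMatrix p (Polynomial.C c) = Matrix.diagonal fun _ => c := by
  have hC : (Polynomial.C c).natDegree = 0 := Polynomial.natDegree_C c
  ext i j
  rw [sylvesterMatrix, Matrix.of_apply, if_neg (by omega), Matrix.diagonal_apply]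
  by_cases hij : i = j
  · subst hij
    rw [if_pos ⟨Nat.sub_le _ _, by omega⟩, Polynomial.coeff_C, if_pos (by omega), if_pos rfl]
  · rw [if_neg (by omega), if_neg hij]

theorem resultant_C_left (c : A) (q : Polynomial A) :
    resultant (Polynomial.C c) q = c ^ q.natDegree := by
  simp [resultant, sylvesterMatrix_C_left]

theorem resultant_C_right (p : Polynomial A) (c : A) :
    resultant p (Polynomial.C c) = c ^ p.natDegree := by
  simp [resultant, sylvesterMatrix_C_right]

end Resultant

section ResWrt

variable {σ R : Type*} [CommRing R] [DecidableEq σ]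

theorem vars_resWrt_subset (k : σ) (f g : MvPolynomial σ R) :
    (resWrt k f g).vars ⊆ f.vars ∪ g.vars := by
  have hres := resultant_mem_of_coeff_mem
    (S := (supported R {s : {j : σ // j ≠ k} | (s : σ) ∈ f.vars ∪ g.vars}).toSubring)
    (fun i => mem_supported.2 fun s hs =>
      Finset.mem_union_left _ (val_mem_vars_of_mem_vars_coeff_toUnivar k f i hs))
    (fun i => mem_supported.2 fun s hs =>
      Finset.mem_union_right _ (val_mem_vars_of_mem_vars_coeff_toUnivar k g i hs))
  intro y hy
  obtain ⟨s, hs, rfl⟩ := mem_vars_rename _ _ hy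
  exact mem_supported.1 hres hs

theorem vars_resWrt_subset_left {k : σ} {f : MvPolynomial σ R} (g : MvPolynomial σ R)
    (hk : k ∉ f.vars) : (resWrt k f g).vars ⊆ f.vars := by
  have hres : resWrt k f g = coeffWrt k f 0 ^ (toUnivar k g).natDegree := by
    rw [resWrt, toUnivar_eq_C_of_notMem_vars hk, resultant_C_left, map_pow]
    rfl
  rw [hres]
  exact (vars_pow _ _).trans (vars_coeffWrt_subset k f 0)

theorem vars_resWrt_subset_right {k : σ} (f : MvPolynomial σ R) {g : MvPolynomial σ R}
    (hk : k ∉ g.vars) : (resWrt k f g).vars ⊆ g.vars := by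
  have hres : resWrt k f g = coeffWrt k g 0 ^ (toUnivar k f).natDegree := by
    rw [resWrt, toUnivar_eq_C_of_notMem_vars hk, resultant_C_right, map_pow]
    rfl
  rw [hres]
  exact (vars_pow _ _).trans (vars_coeffWrt_subset k g 0)

end ResWrt

theorem assocGraph_le_iff {σ R : Type*} [CommSemiring R] [DecidableEq σ]
    {F : Set (MvPolynomial σ R)} {G : SimpleGraph σ} :
    assocGraph F ≤ G ↔ ∀ f ∈ F, G.IsClique (f.vars : Set σ) :=
  ⟨fun h f hf _ hi _ hj hij => h ⟨hij, f, hf, hi, hj⟩,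
    fun h _ _ ⟨hij, f, hf, hi, hj⟩ => h f hf hi hj hij⟩

theorem IsPEO.isClique_union {V : Type*} {G : SimpleGraph V} {lt : V → V → Prop}
    (hpeo : IsPEO G lt) {v : V} {s t : Set V} (hs : G.IsClique s) (ht : G.IsClique t)
    (hvs : v ∈ s) (hvt : v ∈ t) (hlts : ∀ u ∈ s, u = v ∨ lt u v)
    (hltt : ∀ u ∈ t, u = v ∨ lt u v) : G.IsClique (s ∪ t) := by
  have hsub : ∀ r : Set V, G.IsClique r → v ∈ r → (∀ u ∈ r, u = v ∨ lt u v) →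
      r ⊆ insert v {u | lt u v ∧ G.Adj u v} := by
    intro r hr hvr hltr u hu
    by_cases huv : u = v
    · exact huv ▸ Set.mem_insert _ _
    · exact Set.mem_insert_of_mem _ ⟨(hltr u hu).resolve_left huv, hr hu hvr huv⟩
  exact (hpeo v).subset (Set.union_subset (hsub s hs hvs hlts) (hsub t ht hvt hltt))

/-- If `G` is a chordal structure of the finite set `A` having a perfect
elimination ordering in which `x` is `≥` every variable occurring in `A`, then `G` is a chordal
structure of `Proj(A, x)`. -/
theorem chordalStructure_proj {K : Type*} [Field K] {n : ℕ}
    (A : Finset (MvPolynomial (Fin n) K)) (x : Fin n)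
    (G : SimpleGraph (Fin n)) (hG : ChordalStructure G (A : Set (MvPolynomial (Fin n) K)))
    (hord : ∃ lt : Fin n → Fin n → Prop, IsStrictTotalOrder (Fin n) lt ∧ IsPEO G lt ∧
      ∀ f ∈ A, ∀ y ∈ f.vars, y = x ∨ lt y x) :
    ChordalStructure G (ProjSet x (A : Set (MvPolynomial (Fin n) K))) := by
  obtain ⟨hchordal, hsub⟩ := hG
  obtain ⟨lt, -, hpeo, hlt⟩ := hord
  have hA := assocGraph_le_iff.1 hsub
  refine ⟨hchordal, assocGraph_le_iff.2 ?_⟩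
  rintro p ((⟨⟨f, hf, i, rfl⟩, -⟩ | ⟨f, hf, rfl⟩) | ⟨f, hf, g, hg, -, rfl⟩)
  · exact (hA f hf).subset (Finset.coe_subset.2 (vars_coeffWrt_subset x f i))
  · refine (hA f hf).subset (Finset.coe_subset.2 ?_)
    exact (vars_resWrt_subset x f _).trans (Finset.union_subset le_rfl (vars_pderiv_subset x f))
  · by_cases hxf : x ∈ f.vars
    · by_cases hxg : x ∈ g.vars
      · refine (hpeo.isClique_union (hA f hf) (hA g hg) hxf hxg (hlt f hf) (hlt g hg)).subset ?_
        exact_mod_cast vars_resWrt_subset x f g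
      · exact (hA g hg).subset (Finset.coe_subset.2 (vars_resWrt_subset_right f hxg))
    · exact (hA f hf).subset (Finset.coe_subset.2 (vars_resWrt_subset_left g hxf))
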